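/- arXiv:2408.10103 — 4 statements merged into one kernel-verified Lean document; each statement's English description precedes it below -/
import Mathlib

section
/- For n = 3, the choice t_2 = 2t_1/5 and t_3 = t_1/15 (with t_1 ≠ 0) makes ε(k) = -2(t_1 cos k + t_2 cos 2k + t_3 cos 3k) satisfy ε^{(r)}(π) = 0 for r = 1,2,3,4,5 and ε^{(6)}(π) ≠ 0; i.e., k = π is a critical point of order exactly 6. -/
/-!
A cosine polynomial `∑ aⱼ cos (j k)` with integer frequencies is even about `π`, so its odd
derivatives vanish there, while its `2m`-th derivative at `π` is `(-1)ᵐ ∑ aⱼ j²ᵐ (-1)ʲ`.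
For `ε` the even moments are `-2 (-1)ᵐ (-t₁ + 4ᵐ t₂ - 9ᵐ t₃)`; the choice `t₂ = 2t₁/5`,
`t₃ = t₁/15` solves the Vandermonde system killing `m = 1, 2`, and `m = 3` leaves `-48 t₁`.
-/

open Real Finset

theorem iteratedDeriv_cos_nat_mul_odd_at_pi (j m : ℕ) :
    iteratedDeriv (2 * m + 1) (fun x => cos (j * x)) π = 0 := by
  rw [iteratedDeriv_comp_const_mul contDiff_cos, iteratedDeriv_odd_cos]
  simp [sin_nat_mul_pi]

theorem iteratedDeriv_cos_nat_mul_even_at_pi (j m : ℕ) :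
    iteratedDeriv (2 * m) (fun x => cos (j * x)) π = (-1) ^ m * j ^ (2 * m) * (-1) ^ j := by
  rw [iteratedDeriv_comp_const_mul contDiff_cos, iteratedDeriv_even_cos]
  simp only [Pi.mul_apply, Pi.pow_apply, Pi.neg_apply, Pi.one_apply, cos_nat_mul_pi]
  ring

section CosinePolynomial

variable {ι : Type*} (s : Finset ι) (a : ι → ℝ) (ω : ι → ℕ)

theorem iteratedDeriv_sum_cos_eq_sum (n : ℕ) (x : ℝ) :
    iteratedDeriv n (fun k => ∑ i ∈ s, a i * cos (ω i * k)) x =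
      ∑ i ∈ s, a i * iteratedDeriv n (fun k => cos (ω i * k)) x := by
  rw [iteratedDeriv_fun_sum fun i _ => by fun_prop]
  simp only [iteratedDeriv_const_mul_field]

theorem iteratedDeriv_sum_cos_odd_at_pi (m : ℕ) :
    iteratedDeriv (2 * m + 1) (fun k => ∑ i ∈ s, a i * cos (ω i * k)) π = 0 := by
  simp [iteratedDeriv_sum_cos_eq_sum, iteratedDeriv_cos_nat_mul_odd_at_pi]

theorem iteratedDeriv_sum_cos_even_at_pi (m : ℕ) :
    iteratedDeriv (2 * m) (fun k => ∑ i ∈ s, a i * cos (ω i * k)) π =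
      (-1) ^ m * ∑ i ∈ s, a i * ω i ^ (2 * m) * (-1) ^ ω i := by
  rw [iteratedDeriv_sum_cos_eq_sum, mul_sum]
  refine sum_congr rfl fun i _ => ?_
  rw [iteratedDeriv_cos_nat_mul_even_at_pi]
  ring

end CosinePolynomial

/-- For n = 3 with t₂ = 2t₁/5 and t₃ = t₁/15 (t₁ ≠ 0), the point k = π is a
critical point of ε(k) = -2(t₁ cos k + t₂ cos 2k + t₃ cos 3k) of order exactly
6: the derivatives of orders 1 through 5 vanish at π while the sixth does not. -/
theorem sixth_order_critical_point
    (t₁ t₂ t₃ : ℝ) (ht₁ : t₁ ≠ 0) (ht₂ : t₂ = 2 * t₁ / 5) (ht₃ : t₃ = t₁ / 15)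
    (ε : ℝ → ℝ)
    (hε : ∀ k : ℝ, ε k =
      -2 * (t₁ * Real.cos k + t₂ * Real.cos (2 * k) + t₃ * Real.cos (3 * k))) :
    (∀ r : ℕ, 1 ≤ r → r ≤ 5 → iteratedDeriv r ε Real.pi = 0) ∧
    iteratedDeriv 6 ε Real.pi ≠ 0 := by
  set a : Fin 3 → ℝ := ![t₁, t₂, t₃]
  set ω : Fin 3 → ℕ := ![1, 2, 3]
  have hε_sum : ε = fun k => -2 * ∑ i, a i * cos (ω i * k) := by
    funext k
    simp [hε, a, ω, Fin.sum_univ_three]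
  have even_at_pi (m : ℕ) :
      iteratedDeriv (2 * m) ε π = -2 * (-1) ^ m * (-t₁ + 4 ^ m * t₂ - 9 ^ m * t₃) := by
    rw [hε_sum, iteratedDeriv_const_mul_field, iteratedDeriv_sum_cos_even_at_pi]
    simp only [a, ω, Fin.sum_univ_three, Matrix.cons_val_zero, Matrix.cons_val_one,
      Matrix.cons_val_two, Matrix.tail_cons, Matrix.head_cons, pow_mul]
    push_cast
    ring
  refine ⟨fun r hr₁ hr₅ => ?_, ?_⟩
  · obtain ⟨m, rfl | rfl⟩ := Nat.even_or_odd' r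
    · obtain rfl | rfl : m = 1 ∨ m = 2 := by omega
      all_goals rw [even_at_pi, ht₂, ht₃]; ring
    · rw [hε_sum, iteratedDeriv_const_mul_field, iteratedDeriv_sum_cos_odd_at_pi, mul_zero]
  · rw [show 6 = 2 * 3 by rfl, even_at_pi, ht₂, ht₃]
    intro h
    exact ht₁ (by linarith)
end

section
/- For n = 3 with t_1 = 1, t_2 = √3/4, t_3 = 1/4, the point k_* = arccos(-1/√12) satisfies ε'(k_*) = 0 and ε''(k_*) = 0 but ε'''(k_*) ≠ 0 for ε(k) = -2(cos k + (√3/4) cos 2k + (1/4) cos 3k); i.e., k_* is a third-order critical point (saddle point). -/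
/-!
Since `cos 2k` and `cos 3k` are polynomials in `cos k`, `ε = P ∘ cos` with
`P y = 19√3/36 - 2 (y + 1/√12)³`, a cubic with a triple root at `cos k_* = -1/√12`.
By Faà di Bruno, the first two derivatives of `P ∘ cos` vanish at `k_*`, and the third is
`(-sin k_*)³ P'''(cos k_*) = 12 sin³ k_*`, which is nonzero as `k_* ∈ (0, π)`.
-/

open Real
open scoped Nat

section scomp

variable {𝕜 E : Type*} [NontriviallyNormedField 𝕜] [NormedAddCommGroup E] [NormedSpace 𝕜 E]
  {g : 𝕜 → E} {f : 𝕜 → 𝕜} {x : 𝕜}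

theorem iteratedDeriv_scomp_of_deriv_eq_zero_of_iteratedDeriv_two_eq_zero
    (hg : ContDiffAt 𝕜 3 g (f x)) (hf : ContDiffAt 𝕜 3 f x)
    (hg₁ : deriv g (f x) = 0) (hg₂ : iteratedDeriv 2 g (f x) = 0) :
    iteratedDeriv 1 (g ∘ f) x = 0 ∧ iteratedDeriv 2 (g ∘ f) x = 0 ∧
      iteratedDeriv 3 (g ∘ f) x = deriv f x ^ 3 • iteratedDeriv 3 g (f x) := by
  refine ⟨?_, ?_, ?_⟩
  · rw [iteratedDeriv_one, deriv.scomp x (hg.differentiableAt (by norm_num))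
      (hf.differentiableAt (by norm_num)), hg₁, smul_zero]
  · rw [iteratedDeriv_scomp_two (hg.of_le (by norm_num)) (hf.of_le (by norm_num)), hg₁, hg₂]
    simp
  · rw [iteratedDeriv_scomp_three hg hf, hg₁, hg₂]
    simp

end scomp

section monomial

variable {𝕜 : Type*} [NontriviallyNormedField 𝕜]

theorem iteratedDeriv_pow_sub_self (k m : ℕ) (c : 𝕜) :
    iteratedDeriv k (fun y => (y - c) ^ m) c = if k = m then (m ! : 𝕜) else 0 := by
  simpa [iteratedDeriv_comp_sub_const (f := (· ^ m))] using
    iteratedDeriv_fun_pow_zero (𝕜 := 𝕜) (n := k) (m := m)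

theorem iteratedDeriv_const_add_mul_pow_sub_self {k : ℕ} (hk : 0 < k) (m : ℕ) (a b c : 𝕜) :
    iteratedDeriv k (fun y => b + a * (y - c) ^ m) c = if k = m then a * m ! else 0 := by
  rw [iteratedDeriv_const_add hk, iteratedDeriv_const_mul_field, iteratedDeriv_pow_sub_self]
  split_ifs <;> simp

end monomial

theorem sqrt_twelve : √12 = 2 * √3 := by
  rw [show (12 : ℝ) = 2 ^ 2 * 3 by norm_num, sqrt_mul (by positivity), sqrt_sq (by norm_num)]

theorem neg_two_mul_trig_sum_eq_cube_cos (k : ℝ) :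
    -2 * (cos k + (√3 / 4) * cos (2 * k) + (1 / 4) * cos (3 * k)) =
      19 * √3 / 36 + -2 * (cos k - -1 / √12) ^ 3 := by
  have h3 : √3 ^ 2 = 3 := sq_sqrt (by norm_num)
  rw [cos_two_mul, cos_three_mul, sqrt_twelve]
  field_simp
  linear_combination
    (1728 * cos k ^ 2 - 288 * √3 * cos k - (16 + 576 * cos k ^ 2) * (√3 ^ 2 + 3)) * h3

theorem neg_one_div_sqrt_twelve_mem_Ioo : -1 / √12 ∈ Set.Ioo (-1 : ℝ) 1 := by
  have h12 : 1 < √12 := by rw [lt_sqrt zero_le_one]; norm_num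
  constructor
  · rw [lt_div_iff₀ (by positivity)]; linarith
  · rw [div_lt_iff₀ (by positivity)]; linarith

theorem sin_arccos_pos {x : ℝ} (hx : x ∈ Set.Ioo (-1 : ℝ) 1) : 0 < sin (arccos x) := by
  rw [sin_arccos, Real.sqrt_pos]
  nlinarith [hx.1, hx.2]

/-- For ε(k) = -2(cos k + (√3/4) cos 2k + (1/4) cos 3k), the point
k_* = arccos(-1/√12) is a third-order critical point (saddle point):
ε'(k_*) = ε''(k_*) = 0 but ε'''(k_*) ≠ 0. -/
theorem third_order_saddle
    (ε : ℝ → ℝ)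
    (hε : ∀ k : ℝ, ε k =
      -2 * (Real.cos k + (Real.sqrt 3 / 4) * Real.cos (2 * k)
        + (1 / 4) * Real.cos (3 * k)))
    (kstar : ℝ) (hk : kstar = Real.arccos (-1 / Real.sqrt 12)) :
    iteratedDeriv 1 ε kstar = 0 ∧ iteratedDeriv 2 ε kstar = 0 ∧
      iteratedDeriv 3 ε kstar ≠ 0 := by
  set P : ℝ → ℝ := fun y => 19 * √3 / 36 + -2 * (y - -1 / √12) ^ 3
  have hεP : ε = P ∘ cos := funext fun k => (hε k).trans (neg_two_mul_trig_sum_eq_cube_cos k)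
  have hP {n : ℕ} (hn : 0 < n) := iteratedDeriv_const_add_mul_pow_sub_self hn 3 (-2 : ℝ)
    (19 * √3 / 36) (-1 / √12)
  have hmem := neg_one_div_sqrt_twelve_mem_Ioo
  have hcos : cos kstar = -1 / √12 := hk ▸ cos_arccos hmem.1.le hmem.2.le
  have hsin : 0 < sin kstar := hk ▸ sin_arccos_pos hmem
  obtain ⟨h₁, h₂, h₃⟩ := iteratedDeriv_scomp_of_deriv_eq_zero_of_iteratedDeriv_two_eq_zero
    (g := P) (by fun_prop) contDiff_cos.contDiffAt
    (by rw [hcos, ← iteratedDeriv_one]; exact (hP one_pos).trans (if_neg (by norm_num)))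
    (by rw [hcos]; exact (hP two_pos).trans (if_neg (by norm_num)))
  refine hεP ▸ ⟨h₁, h₂, ?_⟩
  rw [h₃, hcos, hP three_pos, if_pos rfl, Real.deriv_cos]
  simp [hsin.ne', Nat.factorial_ne_zero]
end

section
/- For the trigonometric polynomial ε(k) = -2 Σ_{m=1}^n t_m cos(mk) with t_n ≠ 0, the order p of any critical point at real k₀ is at most 2n; i.e., it is impossible that all derivatives ε^{(r)}(k₀) vanish for r = 1,…,2n. -/
/-!
Differentiating termwise, `ε^(2j+1)(k₀)` and `ε^(2j+2)(k₀)` are, up to sign,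
`∑ₘ (tₘ m sin (m k₀)) (m²)ʲ` and `∑ₘ (tₘ m² cos (m k₀)) (m²)ʲ`. Their vanishing for `j < n` is a
Vandermonde system in the distinct nodes `m²`, `1 ≤ m ≤ n`, so `tₙ n sin (n k₀)` and
`tₙ n² cos (n k₀)` both vanish, which is impossible since `tₙ ≠ 0` and `sin² + cos² = 1`.
-/

open Real Finset

theorem eq_zero_of_forall_sum_mul_pow_eq_zero {ι K : Type*} [Field K] {s : Finset ι}
    {x v : ι → K} (hx : Set.InjOn x s) (hv : ∀ j < #s, ∑ i ∈ s, v i * x i ^ j = 0) :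
    ∀ i ∈ s, v i = 0 := by
  set e := s.equivFin
  have hinj : Function.Injective fun k => x (e.symm k) :=
    fun k l hkl => e.symm.injective (Subtype.ext (hx (e.symm k).2 (e.symm l).2 hkl))
  have hzero := Matrix.eq_zero_of_forall_pow_sum_mul_pow_eq_zero (v := fun k => v (e.symm k))
    hinj fun j => by
      rw [e.symm.sum_comp fun i : s => v i * x i ^ (j : ℕ),
        sum_coe_sort s fun i => v i * x i ^ (j : ℕ)]
      exact hv j j.isLt
  intro i hi
  simpa using congrFun hzero (e ⟨i, hi⟩)

section CosineSum

variable {ι : Type*} (s : Finset ι) (a ω : ι → ℝ) (x : ℝ)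

theorem iteratedDeriv_sum_mul_cos_mul (r : ℕ) :
    iteratedDeriv r (fun k => ∑ i ∈ s, a i * cos (ω i * k)) x
      = ∑ i ∈ s, a i * ω i ^ r * iteratedDeriv r cos (ω i * x) := by
  rw [iteratedDeriv_fun_sum fun i _ => by fun_prop]
  refine sum_congr rfl fun i _ => ?_
  rw [iteratedDeriv_const_mul_field, iteratedDeriv_comp_const_mul contDiff_cos, mul_assoc]

theorem iteratedDeriv_odd_sum_mul_cos_mul (j : ℕ) :
    iteratedDeriv (2 * j + 1) (fun k => ∑ i ∈ s, a i * cos (ω i * k)) x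
      = (-1) ^ (j + 1) * ∑ i ∈ s, a i * ω i * sin (ω i * x) * (ω i ^ 2) ^ j := by
  rw [iteratedDeriv_sum_mul_cos_mul, iteratedDeriv_odd_cos, mul_sum]
  refine sum_congr rfl fun i _ => ?_
  simp only [Pi.mul_apply, Pi.pow_apply, Pi.neg_apply, Pi.one_apply]
  ring

theorem iteratedDeriv_even_sum_mul_cos_mul (j : ℕ) :
    iteratedDeriv (2 * j + 2) (fun k => ∑ i ∈ s, a i * cos (ω i * k)) x
      = (-1) ^ (j + 1) * ∑ i ∈ s, a i * ω i ^ 2 * cos (ω i * x) * (ω i ^ 2) ^ j := by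
  rw [iteratedDeriv_sum_mul_cos_mul, show 2 * j + 2 = 2 * (j + 1) by ring,
    iteratedDeriv_even_cos, mul_sum]
  refine sum_congr rfl fun i _ => ?_
  simp only [Pi.mul_apply, Pi.pow_apply, Pi.neg_apply, Pi.one_apply]
  ring

end CosineSum

/-- For ε(k) = -2 Σ_{m=1}^n t_m cos(mk) with t_n ≠ 0, the derivatives of
orders 1 through 2n at a real point k₀ cannot all vanish; i.e. the order of
any critical point is at most 2n. -/
theorem critical_order_at_most_two_n
    (n : ℕ) (hn : 1 ≤ n) (t : ℕ → ℝ) (ht : t n ≠ 0) (ε : ℝ → ℝ)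
    (hε : ∀ k : ℝ, ε k = -2 * ∑ m ∈ Finset.Icc 1 n, t m * Real.cos (m * k))
    (k₀ : ℝ) :
    ¬ (∀ r : ℕ, 1 ≤ r → r ≤ 2 * n → iteratedDeriv r ε k₀ = 0) := by
  intro h
  have hε' : ε = fun k => ∑ m ∈ Icc 1 n, -2 * t m * cos (m * k) := by
    funext k
    simp only [hε, mul_sum, mul_assoc]
  have hcard : #(Icc 1 n) = n := by simp
  have hnodes : Set.InjOn (fun m : ℕ => (m : ℝ) ^ 2) (Icc 1 n) := fun a _ b _ hab => by
    simpa using hab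
  have hn_mem : n ∈ Icc 1 n := by simp [hn]
  have hsin := eq_zero_of_forall_sum_mul_pow_eq_zero hnodes (fun j hj => by
    have := h (2 * j + 1) (by omega) (by omega)
    rwa [hε', iteratedDeriv_odd_sum_mul_cos_mul, mul_eq_zero, or_iff_right (by simp)] at this)
    n hn_mem
  have hcos := eq_zero_of_forall_sum_mul_pow_eq_zero hnodes (fun j hj => by
    have := h (2 * j + 2) (by omega) (by omega)
    rwa [hε', iteratedDeriv_even_sum_mul_cos_mul, mul_eq_zero, or_iff_right (by simp)] at this)
    n hn_mem
  have hn0 : (n : ℝ) ≠ 0 := Nat.cast_ne_zero.mpr (by omega)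
  have hs : sin (n * k₀) = 0 := by simpa [ht, hn0] using hsin
  have hc : cos (n * k₀) = 0 := by simpa [ht, hn0] using hcos
  simpa [hs, hc] using sin_sq_add_cos_sq ((n : ℝ) * k₀)
end

section
/- If ε(k) = -2 Σ_{m=1}^n t_m cos(mk) with t_n ≠ 0 has a critical point of order p > n at real k₀ (i.e., ε^{(r)}(k₀) = 0 for 1 ≤ r < p), then sin(k₀) = 0, i.e., k₀ ∈ {0, ±π} modulo 2π. -/
/-!
Since cos (m k) = T_m (cos k), the dispersion is ε = P ∘ cos for a real polynomial P of degree
exactly n (leading coefficient -2ⁿ tₙ). If sin k₀ ≠ 0, write P - P(cos k₀) = (X - cos k₀)ʲ R with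
R(cos k₀) ≠ 0, so 1 ≤ j ≤ n < p. Then ε - ε(k₀) = (cos - cos k₀)ʲ · (R ∘ cos), and its j-th
derivative at k₀ is j! (-sin k₀)ʲ R(cos k₀) ≠ 0, contradicting criticality of order p.
-/

open Polynomial Finset
open scoped ContDiff

section

variable {𝕜 : Type*} [NontriviallyNormedField 𝕜]

theorem iteratedDeriv_pow_mul_of_eq_zero {f g : 𝕜 → 𝕜} (hf : ContDiff 𝕜 ∞ f)
    (hg : ContDiff 𝕜 ∞ g) {x : 𝕜} (hfx : f x = 0) (j : ℕ) :
    iteratedDeriv j (fun y => f y ^ j * g y) x = j.factorial * deriv f x ^ j * g x := by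
  induction j generalizing g with
  | zero => simp
  | succ j ih =>
    have hf' := (contDiff_infty_iff_deriv.mp hf).2
    have hg' := (contDiff_infty_iff_deriv.mp hg).2
    have hderiv : deriv (fun y => f y ^ (j + 1) * g y)
        = fun y => f y ^ j * ((j + 1) * deriv f y * g y + f y * deriv g y) := by
      funext y
      have hfd : DifferentiableAt 𝕜 f y := hf.differentiable (by simp) y
      have hgd : DifferentiableAt 𝕜 g y := hg.differentiable (by simp) y
      rw [((hfd.hasDerivAt.fun_pow (j + 1)).fun_mul hgd.hasDerivAt).deriv]
      simp only [add_tsub_cancel_right, Nat.cast_add, Nat.cast_one]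
      ring
    rw [iteratedDeriv_succ', hderiv, ih (by fun_prop), hfx]
    push_cast [Nat.factorial_succ]
    ring

theorem exists_iteratedDeriv_eval_comp_ne_zero [CharZero 𝕜] {P : 𝕜[X]} (hP : 0 < P.natDegree)
    {φ : 𝕜 → 𝕜} (hφ : ContDiff 𝕜 ∞ φ) {x : 𝕜} (hφx : deriv φ x ≠ 0) :
    ∃ r, 1 ≤ r ∧ r ≤ P.natDegree ∧ iteratedDeriv r (fun y => P.eval (φ y)) x ≠ 0 := by
  set a := φ x
  set Q := P - C (P.eval a)
  have hQdeg : Q.natDegree = P.natDegree := natDegree_sub_C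
  have hQ : Q ≠ 0 := ne_zero_of_natDegree_gt (hQdeg ▸ hP)
  set j := Q.rootMultiplicity a
  set R := Q /ₘ (X - C a) ^ j
  have hj : 0 < j := (rootMultiplicity_pos hQ).mpr (by simp [Q])
  have hsplit : (fun y => P.eval (φ y)) = fun y => P.eval a + ((φ y - a) ^ j * R.eval (φ y)) := by
    funext y
    have := congrArg (eval (φ y)) (pow_mul_divByMonic_rootMultiplicity_eq Q a)
    rw [eval_mul, eval_pow, eval_sub, eval_X, eval_C, eval_sub, eval_C] at this
    linear_combination -this
  refine ⟨j, hj, ?_, ?_⟩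
  · simpa [hQdeg] using natDegree_le_of_dvd (pow_rootMultiplicity_dvd Q a) hQ
  · have hR : ContDiff 𝕜 ∞ fun y => R.eval (φ y) := by
      simpa [Function.comp_def] using (R.contDiff_aeval ∞).comp hφ
    rw [hsplit, iteratedDeriv_const_add hj,
      iteratedDeriv_pow_mul_of_eq_zero (hφ.sub contDiff_const) hR (sub_self a), deriv_sub_const]
    exact mul_ne_zero (mul_ne_zero (Nat.cast_ne_zero.mpr j.factorial_ne_zero) (pow_ne_zero _ hφx))
      (eval_divByMonic_pow_rootMultiplicity_ne_zero a hQ)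

end

noncomputable def bandPolynomial (n : ℕ) (t : ℕ → ℝ) : ℝ[X] :=
  ∑ m ∈ Icc 1 n, C (-2 * t m) * Chebyshev.T ℝ m

theorem bandPolynomial_eval_cos (n : ℕ) (t : ℕ → ℝ) (k : ℝ) :
    (bandPolynomial n t).eval (Real.cos k) = -2 * ∑ m ∈ Icc 1 n, t m * Real.cos (m * k) := by
  simp [bandPolynomial, eval_finsetSum, mul_sum, mul_assoc]

theorem natDegree_bandPolynomial {n : ℕ} (hn : 1 ≤ n) {t : ℕ → ℝ} (ht : t n ≠ 0) :
    (bandPolynomial n t).natDegree = n := by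
  have hdeg (m : ℕ) : (Chebyshev.T ℝ m).natDegree = m := by simp
  refine natDegree_eq_of_le_of_coeff_ne_zero ?_ ?_
  · refine natDegree_sum_le_of_forall_le _ _ fun m hm => ?_
    exact (natDegree_C_mul_le _ _).trans ((hdeg m).trans_le (mem_Icc.mp hm).2)
  · rw [bandPolynomial, finsetSum_coeff, sum_eq_single_of_mem n (mem_Icc.mpr ⟨hn, le_rfl⟩)]
    · have hlead := Chebyshev.leadingCoeff_T ℝ n
      rw [leadingCoeff, hdeg] at hlead
      rw [coeff_C_mul, hlead]
      exact mul_ne_zero (mul_ne_zero (by norm_num) ht) (by positivity)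
    · intro m hm hmn
      rw [coeff_C_mul, coeff_eq_zero_of_natDegree_lt, mul_zero]
      exact (hdeg m).trans_lt (lt_of_le_of_ne (mem_Icc.mp hm).2 hmn)

theorem high_order_critical_point_at_band_edge_general
    (n : ℕ) (hn : 1 ≤ n) (t : ℕ → ℝ) (ht : t n ≠ 0)
    (p : ℕ) (hnp : n < p) (ε : ℝ → ℝ)
    (hε : ∀ k : ℝ, ε k = -2 * ∑ m ∈ Finset.Icc 1 n, t m * Real.cos (m * k))
    (k₀ : ℝ)
    (hder : ∀ r : ℕ, 1 ≤ r → r < p → iteratedDeriv r ε k₀ = 0) :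
    Real.sin k₀ = 0 := by
  by_contra hsin
  have hεP : ε = fun k => (bandPolynomial n t).eval (Real.cos k) := by
    funext k
    rw [hε, bandPolynomial_eval_cos]
  obtain ⟨r, hr1, hrn, hr⟩ := exists_iteratedDeriv_eval_comp_ne_zero
    (natDegree_bandPolynomial hn ht ▸ hn) Real.contDiff_cos (x := k₀) (by simpa using hsin)
  rw [natDegree_bandPolynomial hn ht] at hrn
  exact hr (hεP ▸ hder r hr1 (by omega))

/-- If ε(k) = -2 Σ_{m=1}^n t_m cos(mk) with t_n ≠ 0 has a critical point of
order p > n at a real k₀ (all derivatives of orders 1,…,p-1 vanish at k₀),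
then sin k₀ = 0, i.e. k₀ ∈ {0, ±π} modulo 2π. -/
theorem high_order_critical_point_at_band_edge
    (n : ℕ) (hn : 1 ≤ n) (t : ℕ → ℝ) (ht : t n ≠ 0)
    (p : ℕ) (hnp : n < p) (hp2n : p ≤ 2 * n) (ε : ℝ → ℝ)
    (hε : ∀ k : ℝ, ε k = -2 * ∑ m ∈ Finset.Icc 1 n, t m * Real.cos (m * k))
    (k₀ : ℝ)
    (hder : ∀ r : ℕ, 1 ≤ r → r < p → iteratedDeriv r ε k₀ = 0) :
    Real.sin k₀ = 0 :=
  high_order_critical_point_at_band_edge_general n hn t ht p hnp ε hε k₀ hder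
end
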